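/- Let (X,d,μ) satisfy the standing assumptions and suppose μ is globally doubling, i.e., there is C_d ≥ 1 with μ(B(x,2r)) ≤ C_d·μ(B(x,r)) for all x ∈ X and r > 0. Suppose there exists a point x₀ ∈ X such that the function r ↦ μ(B(x₀,r)) is continuous on (0,∞). Then for every 1 ≤ p < ∞ there exists a locally Lipschitz function f : X → ℝ such that ∫_X (lip f)^p dμ < ∞ but ∫_X |f − c|^p dμ = ∞ for every c ∈ ℝ. -/

import Mathlib

open MeasureTheory Metric Set Filter
open scoped ENNReal NNReal Topology

/-- The pointwise Lipschitz constant `(lip f)(x) = limsup_{y → x, y ≠ x} |f y - f x| / d(y,x)`,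
valued in `[0,∞]`. -/
noncomputable def lipConst {X : Type*} [MetricSpace X] (f : X → ℝ) (x : X) : ℝ≥0∞ :=
  Filter.limsup (fun y => ENNReal.ofReal (|f y - f x| / dist y x)) (nhdsWithin x {x}ᶜ)

/-!
Take `f = φ ∘ d(·, x₀)` with `φ` piecewise linear, constant on `[0, 1]` and of slope `-s k` on
`[2 ^ k, 2 ^ (k + 1)]`, where `s k ^ p * μ (A k) = 2⁻¹ ^ k` for the dyadic annuli
`A k = B(x₀, 2 ^ (k + 1)) \ B(x₀, 2 ^ k)`. Since `X` is connected, each `A k` contains a ball of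
radius comparable to `2 ^ k`, so by doubling the measures of neighbouring annuli are comparable
and `∫ (lip f) ^ p ≲ ∑ s k ^ p * μ (A k) < ∞`.

At infinity `f` tends to `-T`, where `T = ∑ 2 ^ k * s k ∈ [0, ∞]` is the total drop, while the
complement of every ball has infinite measure; hence `∫ |f - c| ^ p = ∞` for `c ≠ -T`. For
`c = -T` we still have `|f - c| ≥ 2 ^ (k + 1) * s (k + 1)` on `A k`, so for `p ≥ 1`
`∫_{A k} |f - c| ^ p ≥ 2 ^ (k + 1) * s (k + 1) ^ p * μ (A k) = μ (A k) / μ (A (k + 1)) ≳ 1`.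
-/

noncomputable def dyadicRamp (j : ℕ) (r : ℝ) : ℝ := max 0 (min (r - 2 ^ j) (2 ^ j))

noncomputable def dyadicProfile (s : ℕ → ℝ≥0) (r : ℝ) : ℝ := -∑' j, (s j : ℝ) * dyadicRamp j r

lemma dyadicRamp_nonneg (j : ℕ) (r : ℝ) : 0 ≤ dyadicRamp j r := le_max_left _ _

lemma dyadicRamp_le_two_pow (j : ℕ) (r : ℝ) : dyadicRamp j r ≤ 2 ^ j :=
  max_le (by positivity) (min_le_right _ _)

lemma dyadicRamp_of_le_two_pow {j : ℕ} {r : ℝ} (h : r ≤ 2 ^ j) : dyadicRamp j r = 0 :=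
  max_eq_left (min_le_of_left_le (by linarith))

lemma dyadicRamp_of_two_pow_succ_le {j : ℕ} {r : ℝ} (h : 2 ^ (j + 1) ≤ r) :
    dyadicRamp j r = 2 ^ j := by
  rw [pow_succ] at h
  rw [dyadicRamp, min_eq_right (by linarith), max_eq_right (by positivity)]

lemma lipschitzWith_dyadicRamp (j : ℕ) : LipschitzWith 1 (dyadicRamp j) :=
  ((IsometryEquiv.subRight (2 ^ j : ℝ)).isometry.lipschitz.min_const _).const_max _

section DyadicProfile

variable (s : ℕ → ℝ≥0)

lemma dyadicProfile_eq_sum {r : ℝ} {N : ℕ} (hr : r ≤ 2 ^ N) :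
    dyadicProfile s r = -∑ j ∈ Finset.range N, (s j : ℝ) * dyadicRamp j r := by
  rw [dyadicProfile, tsum_eq_sum fun j hj => ?_]
  rw [dyadicRamp_of_le_two_pow (hr.trans (pow_le_pow_right₀ one_le_two (by simpa using hj))),
    mul_zero]

lemma neg_sum_le_dyadicProfile {r : ℝ} {N : ℕ} (hr : r ≤ 2 ^ N) :
    -∑ j ∈ Finset.range N, 2 ^ j * (s j : ℝ) ≤ dyadicProfile s r := by
  rw [dyadicProfile_eq_sum s hr, neg_le_neg_iff]
  exact Finset.sum_le_sum fun j _ => by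
    rw [mul_comm]; exact mul_le_mul_of_nonneg_right (dyadicRamp_le_two_pow j r) (s j).2

lemma dyadicProfile_le_neg_sum {r : ℝ} {m : ℕ} (hr : 2 ^ m ≤ r) :
    dyadicProfile s r ≤ -∑ j ∈ Finset.range m, 2 ^ j * (s j : ℝ) := by
  obtain ⟨N, hN⟩ := pow_unbounded_of_one_lt r one_lt_two
  have hmN : m ≤ N := by
    by_contra! h
    linarith [pow_le_pow_right₀ one_le_two h.le (M₀ := ℝ)]
  rw [dyadicProfile_eq_sum s hN.le, neg_le_neg_iff, ← Finset.sum_range_add_sum_Ico _ hmN]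
  refine le_add_of_le_of_nonneg (Finset.sum_le_sum fun j hj => ?_)
    (Finset.sum_nonneg fun j _ => mul_nonneg (s j).2 (dyadicRamp_nonneg j r))
  rw [dyadicRamp_of_two_pow_succ_le
    ((pow_le_pow_right₀ one_le_two (Finset.mem_range.1 hj)).trans hr), mul_comm]

lemma neg_tsum_le_dyadicProfile (hs : Summable fun j => 2 ^ j * (s j : ℝ)) (r : ℝ) :
    -∑' j, 2 ^ j * (s j : ℝ) ≤ dyadicProfile s r := by
  rw [dyadicProfile, neg_le_neg_iff]
  have hle : ∀ j, (s j : ℝ) * dyadicRamp j r ≤ 2 ^ j * s j := fun j => by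
    rw [mul_comm]; exact mul_le_mul_of_nonneg_right (dyadicRamp_le_two_pow j r) (s j).2
  exact (hs.of_nonneg_of_le (fun j => mul_nonneg (s j).2 (dyadicRamp_nonneg j r)) hle).tsum_le_tsum
    hle hs

lemma tendsto_dyadicProfile_atBot (hs : ¬Summable fun j => 2 ^ j * (s j : ℝ)) :
    Tendsto (dyadicProfile s) atTop atBot := by
  have h := (not_summable_iff_tendsto_nat_atTop_of_nonneg fun j => by positivity).1 hs
  refine Filter.tendsto_atBot.2 fun b => ?_
  obtain ⟨m, hm⟩ := (h.eventually_ge_atTop (-b)).exists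
  filter_upwards [eventually_ge_atTop (2 ^ m)] with r hr
  linarith [dyadicProfile_le_neg_sum s hr]

lemma tendsto_dyadicProfile_nhds (hs : Summable fun j => 2 ^ j * (s j : ℝ)) :
    Tendsto (dyadicProfile s) atTop (𝓝 (-∑' j, 2 ^ j * (s j : ℝ))) := by
  refine tendsto_order.2 ⟨fun a ha => Eventually.of_forall fun r =>
    ha.trans_le (neg_tsum_le_dyadicProfile s hs r), fun b hb => ?_⟩
  obtain ⟨m, hm⟩ := (hs.hasSum.tendsto_sum_nat.eventually (lt_mem_nhds (neg_lt.1 hb))).exists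
  filter_upwards [eventually_ge_atTop (2 ^ m)] with r hr
  linarith [dyadicProfile_le_neg_sum s hr]

lemma lipschitzOnWith_dyadicProfile {a : ℝ} {m N : ℕ} (hm : ∀ j < m, 2 ^ (j + 1) ≤ a) :
    LipschitzOnWith (∑ j ∈ Finset.Ico m N, s j) (dyadicProfile s) (Icc a (2 ^ N)) := by
  refine LipschitzOnWith.of_dist_le_mul fun r hr r' hr' => ?_
  have hterm : ∀ j ∈ Finset.range N, |(s j : ℝ) * dyadicRamp j r' - s j * dyadicRamp j r| ≤
      (if m ≤ j then (s j : ℝ) else 0) * |r - r'| := fun j _ => by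
    split_ifs with hj
    · rw [← mul_sub, abs_mul, NNReal.abs_eq]
      refine mul_le_mul_of_nonneg_left ?_ (s j).2
      simpa [Real.dist_eq, abs_sub_comm r] using (lipschitzWith_dyadicRamp j).dist_le_mul r' r
    · have hconst : ∀ ρ ∈ Icc a (2 ^ N), dyadicRamp j ρ = 2 ^ j :=
        fun ρ hρ => dyadicRamp_of_two_pow_succ_le ((hm j (not_le.1 hj)).trans hρ.1)
      simp [hconst r hr, hconst r' hr']
  have hfilter : (Finset.range N).filter (m ≤ ·) = Finset.Ico m N := by
    rw [Finset.range_eq_Ico, Finset.Ico_filter_le, max_eq_right (Nat.zero_le m)]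
  rw [Real.dist_eq, Real.dist_eq, dyadicProfile_eq_sum s hr.2, dyadicProfile_eq_sum s hr'.2,
    neg_sub_neg, ← Finset.sum_sub_distrib, NNReal.coe_sum, ← hfilter, Finset.sum_filter,
    Finset.sum_mul]
  exact (Finset.abs_sum_le_sum_abs _ _).trans (Finset.sum_le_sum hterm)

end DyadicProfile

lemma locallyLipschitz_dyadicProfile (s : ℕ → ℝ≥0) : LocallyLipschitz (dyadicProfile s) := by
  intro r
  obtain ⟨N, hN⟩ := pow_unbounded_of_one_lt r one_lt_two
  exact ⟨_, Icc (r - 1) (2 ^ N), Icc_mem_nhds (by linarith) hN,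
    lipschitzOnWith_dyadicProfile s (m := 0) (by simp)⟩

lemma LipschitzOnWith.lipConst_le {X : Type*} [MetricSpace X] {f : X → ℝ} {K : ℝ≥0} {t : Set X}
    {x : X} (hf : LipschitzOnWith K f t) (ht : t ∈ 𝓝 x) : lipConst f x ≤ K := by
  refine limsup_le_of_le (by isBoundedDefault) ?_
  filter_upwards [nhdsWithin_le_nhds ht, self_mem_nhdsWithin] with y hy hyx
  rw [← ENNReal.ofReal_coe_nnreal]
  refine ENNReal.ofReal_le_ofReal ((div_le_iff₀ (dist_pos.2 hyx)).2 ?_)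
  exact hf.dist_le_mul y hy x (mem_of_mem_nhds ht)

section DyadicAnnulus

variable {X : Type*} [MetricSpace X]

def dyadicAnnulus (x₀ : X) (k : ℕ) : Set X := ball x₀ (2 ^ (k + 1)) \ ball x₀ (2 ^ k)

lemma mem_dyadicAnnulus {x₀ x : X} {k : ℕ} :
    x ∈ dyadicAnnulus x₀ k ↔ 2 ^ k ≤ dist x x₀ ∧ dist x x₀ < 2 ^ (k + 1) := by
  simp [dyadicAnnulus, and_comm]

lemma exists_mem_dyadicAnnulus {x₀ x : X} (hx : 1 ≤ dist x x₀) :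
    ∃ k, x ∈ dyadicAnnulus x₀ k := by
  simpa only [mem_dyadicAnnulus] using exists_nat_pow_near hx one_lt_two

lemma pairwise_disjoint_dyadicAnnulus (x₀ : X) :
    Pairwise (Function.onFun Disjoint (dyadicAnnulus x₀)) := by
  refine pairwise_disjoint_on _ |>.2 fun j k hjk => Set.disjoint_left.2 fun x hj hk => ?_
  rw [mem_dyadicAnnulus] at hj hk
  linarith [hj.2, hk.1, pow_le_pow_right₀ (one_le_two (α := ℝ)) (by omega : j + 1 ≤ k)]

lemma measurableSet_dyadicAnnulus [MeasurableSpace X] [OpensMeasurableSpace X] (x₀ : X)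
    (k : ℕ) : MeasurableSet (dyadicAnnulus x₀ k) :=
  measurableSet_ball.diff measurableSet_ball

lemma ball_subset_dyadicAnnulus {x₀ y : X} {k : ℕ} (hy : dist y x₀ = 3 * 2 ^ k / 2) :
    ball y (2 ^ k / 2) ⊆ dyadicAnnulus x₀ k := fun z hz => by
  have := dist_triangle z y x₀
  have := dist_triangle_left y x₀ z
  rw [mem_ball] at hz
  rw [mem_dyadicAnnulus, pow_succ]
  constructor <;> linarith

lemma dyadicAnnulus_subset_ball {x₀ y : X} {j k : ℕ} (hy : dist y x₀ = 3 * 2 ^ k / 2)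
    (hjk : j ≤ k + 1) : dyadicAnnulus x₀ j ⊆ ball y (2 ^ 4 * (2 ^ k / 2)) := fun z hz => by
  have htri := dist_triangle_right z y x₀
  have hz := (mem_dyadicAnnulus.1 hz).2.trans_le
    (pow_le_pow_right₀ one_le_two (Nat.succ_le_succ hjk))
  rw [pow_succ, pow_succ] at hz
  rw [mem_ball]
  norm_num
  linarith [pow_pos (two_pos (α := ℝ)) k]

end DyadicAnnulus

lemma measure_compl_eq_top {α : Type*} [MeasurableSpace α] {μ : Measure α}
    {s : Set α} (hμ : μ univ = ⊤) (hs : μ s ≠ ⊤) : μ sᶜ = ⊤ := by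
  by_contra h
  exact ((measure_univ_le_add_compl s).trans_lt
    (ENNReal.add_lt_top.2 ⟨hs.lt_top, lt_top_iff_ne_top.2 h⟩)).ne hμ

section DoublingMeasure

variable {X : Type*} [MetricSpace X] [MeasurableSpace X] {μ : Measure X} {x₀ : X}

lemma exists_dist_eq_of_measure_univ_eq_top [ConnectedSpace X] (hμ : μ univ = ⊤)
    (hfin : ∀ R, 0 < R → μ (ball x₀ R) ≠ ⊤) {r : ℝ} (hr : 0 ≤ r) : ∃ y, dist y x₀ = r := by
  obtain ⟨z, hz⟩ : (ball x₀ (r + 1))ᶜ.Nonempty :=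
    nonempty_of_measure_ne_zero (by rw [measure_compl_eq_top hμ (hfin _ (by linarith))]; simp)
  simp only [mem_compl_iff, mem_ball, not_lt] at hz
  exact intermediate_value_univ x₀ z (continuous_id.dist continuous_const)
    ⟨by simpa using hr, hz.trans' (by linarith)⟩

lemma measure_dyadicAnnulus_pos (hdist : ∀ r, 0 ≤ r → ∃ y, dist y x₀ = r)
    (hpos : ∀ x r, 0 < r → 0 < μ (ball x r)) (k : ℕ) : 0 < μ (dyadicAnnulus x₀ k) := by
  obtain ⟨y, hy⟩ := hdist (3 * 2 ^ k / 2) (by positivity)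
  exact (hpos y _ (by positivity)).trans_le (measure_mono (ball_subset_dyadicAnnulus hy))

variable {C : ℝ≥0∞} (hdoubling : ∀ x r, 0 < r → μ (ball x (2 * r)) ≤ C * μ (ball x r))
include hdoubling

lemma measure_ball_two_pow_mul_le (x : X) (n : ℕ) {r : ℝ} (hr : 0 < r) :
    μ (ball x (2 ^ n * r)) ≤ C ^ n * μ (ball x r) := by
  induction n with
  | zero => simp
  | succ n ih =>
    calc μ (ball x (2 ^ (n + 1) * r)) = μ (ball x (2 * (2 ^ n * r))) := by ring_nf
      _ ≤ C * μ (ball x (2 ^ n * r)) := hdoubling x _ (by positivity)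
      _ ≤ C * (C ^ n * μ (ball x r)) := by gcongr
      _ = C ^ (n + 1) * μ (ball x r) := by ring

lemma measure_dyadicAnnulus_le (hdist : ∀ r, 0 ≤ r → ∃ y, dist y x₀ = r) {j k : ℕ}
    (hjk : j ≤ k + 1) : μ (dyadicAnnulus x₀ j) ≤ C ^ 4 * μ (dyadicAnnulus x₀ k) := by
  obtain ⟨y, hy⟩ := hdist (3 * 2 ^ k / 2) (by positivity)
  calc μ (dyadicAnnulus x₀ j) ≤ μ (ball y (2 ^ 4 * (2 ^ k / 2))) :=
        measure_mono (dyadicAnnulus_subset_ball hy hjk)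
    _ ≤ C ^ 4 * μ (ball y (2 ^ k / 2)) :=
        measure_ball_two_pow_mul_le hdoubling y 4 (by positivity)
    _ ≤ C ^ 4 * μ (dyadicAnnulus x₀ k) := by gcongr; exact ball_subset_dyadicAnnulus hy

end DoublingMeasure

noncomputable def dyadicSlope (a : ℕ → ℝ≥0∞) (p : ℝ) (k : ℕ) : ℝ≥0 :=
  ((2⁻¹ ^ k / a k) ^ p⁻¹).toNNReal

section DyadicSlope

variable {a : ℕ → ℝ≥0∞} {p : ℝ} {k : ℕ}

lemma dyadicSlope_rpow_mul (hp : 0 < p) (h0 : a k ≠ 0) (htop : a k ≠ ⊤) :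
    (dyadicSlope a p k : ℝ≥0∞) ^ p * a k = 2⁻¹ ^ k := by
  rw [dyadicSlope, ENNReal.coe_toNNReal, ENNReal.rpow_inv_rpow hp.ne',
    ENNReal.div_mul_cancel h0 htop]
  exact ENNReal.rpow_ne_top_of_nonneg (inv_nonneg.2 hp.le) (ENNReal.div_ne_top (by simp) h0)

lemma inv_le_two_pow_mul_dyadicSlope_rpow_mul (hp : 1 ≤ p) (h0 : a (k + 1) ≠ 0)
    (htop : a (k + 1) ≠ ⊤) {K : ℝ≥0∞} (hK : a (k + 1) ≤ K * a k) :
    K⁻¹ ≤ ((2 ^ (k + 1) * dyadicSlope a p (k + 1) : ℝ≥0) : ℝ≥0∞) ^ p * a k := by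
  set x : ℝ≥0∞ := (dyadicSlope a p (k + 1) : ℝ≥0∞)
  have h2 : (2 : ℝ≥0∞) ^ (k + 1) ≤ ((2 : ℝ≥0∞) ^ (k + 1)) ^ p := by
    simpa using ENNReal.rpow_le_rpow_of_exponent_le (one_le_pow₀ one_le_two) hp
  rw [← one_div]
  refine ENNReal.div_le_of_le_mul' ?_
  calc (1 : ℝ≥0∞) = 2 ^ (k + 1) * (x ^ p * a (k + 1)) := by
        rw [dyadicSlope_rpow_mul (by linarith) h0 htop, ← mul_pow, ENNReal.mul_inv_cancel] <;> simp
    _ ≤ 2 ^ (k + 1) * (x ^ p * (K * a k)) := by gcongr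
    _ ≤ (2 ^ (k + 1)) ^ p * (x ^ p * (K * a k)) := by gcongr
    _ = K * ((((2 ^ (k + 1) * dyadicSlope a p (k + 1) : ℝ≥0) : ℝ≥0∞) ^ p * a k)) := by
        rw [ENNReal.coe_mul, ENNReal.mul_rpow_of_nonneg _ _ (by linarith)]
        simp [x]; ring

end DyadicSlope

section Energy

variable {X : Type*} [MetricSpace X] {x₀ x : X} (s : ℕ → ℝ≥0)

lemma lipConst_comp_dist_le {φ : ℝ → ℝ} {K : ℝ≥0} {a b δ : ℝ}
    (hφ : LipschitzOnWith K φ (Icc a b)) (hδ : 0 < δ)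
    (hx : ∀ y ∈ ball x δ, dist y x₀ ∈ Icc a b) : lipConst (fun y => φ (dist y x₀)) x ≤ K := by
  simpa [Function.comp_def] using
    (hφ.comp (LipschitzWith.dist_left x₀).lipschitzOnWith hx).lipConst_le (ball_mem_nhds x hδ)

lemma lipConst_dyadicProfile_eq_zero (hx : dist x x₀ < 1) :
    lipConst (fun y => dyadicProfile s (dist y x₀)) x = 0 := by
  refine le_antisymm ?_ zero_le
  have h := lipConst_comp_dist_le (x := x) (x₀ := x₀)
    (lipschitzOnWith_dyadicProfile s (a := 0) (m := 0) (N := 0) (by simp))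
    (sub_pos.2 hx) fun y hy => ⟨dist_nonneg, ?_⟩
  · simpa using h
  · have := dist_triangle y x x₀
    rw [mem_ball] at hy
    simp only [pow_zero]
    linarith

-- The ball of radius `2 ^ k / 2` around `x` only meets the pieces `k - 1, k, k + 1` of the profile.
lemma lipConst_dyadicProfile_le {k : ℕ} (hx : x ∈ dyadicAnnulus x₀ k) :
    lipConst (fun y => dyadicProfile s (dist y x₀)) x ≤
      ↑(∑ j ∈ Finset.Ico (k - 1) (k + 2), s j) := by
  rw [mem_dyadicAnnulus] at hx
  refine lipConst_comp_dist_le (lipschitzOnWith_dyadicProfile s (a := 2 ^ k / 2) fun j hj => ?_)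
    (by positivity : (0 : ℝ) < 2 ^ k / 2) fun y hy => ?_
  · have := pow_le_pow_right₀ (one_le_two (α := ℝ)) (by omega : j + 2 ≤ k)
    rw [pow_succ, pow_succ] at this
    rw [pow_succ]
    linarith
  · have := dist_triangle y x x₀
    have := dist_triangle_left x x₀ y
    rw [mem_ball] at hy
    rw [pow_succ] at hx
    rw [pow_succ, pow_succ]
    constructor <;> linarith

end Energy

lemma rpow_sum_Ico_mul_le {s : ℕ → ℝ≥0} {a : ℕ → ℝ≥0∞} {p : ℝ} (hp : 1 ≤ p) {K : ℝ≥0∞}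
    (ha : ∀ j k, j ≤ k + 1 → a j ≤ K * a k) (hs : ∀ k, (s k : ℝ≥0∞) ^ p * a k = 2⁻¹ ^ k)
    (k : ℕ) :
    (↑(∑ j ∈ Finset.Ico (k - 1) (k + 2), s j) : ℝ≥0∞) ^ p * a k ≤
      3 ^ (p - 1) * K * 6 * 2⁻¹ ^ k := by
  set I := Finset.Ico (k - 1) (k + 2)
  have hI : I.card ≤ 3 := by simp [I]; omega
  have hgeom : ∀ j ∈ I, (2⁻¹ : ℝ≥0∞) ^ j ≤ 2 * 2⁻¹ ^ k := fun j hj => by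
    have : (2⁻¹ : ℝ≥0∞) ^ (j + 1) ≤ 2⁻¹ ^ k :=
      pow_le_pow_right_of_le_one' (by norm_num) (by simp [I] at hj; omega)
    calc (2⁻¹ : ℝ≥0∞) ^ j = 2 * 2⁻¹ ^ (j + 1) := by
          rw [pow_succ, mul_comm, mul_assoc, ENNReal.inv_mul_cancel] <;> simp
      _ ≤ 2 * 2⁻¹ ^ k := by gcongr
  calc (↑(∑ j ∈ I, s j) : ℝ≥0∞) ^ p * a k
      ≤ (I.card : ℝ≥0∞) ^ (p - 1) * (∑ j ∈ I, (s j : ℝ≥0∞) ^ p) * a k := by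
        rw [ENNReal.ofNNReal_finsetSum]
        gcongr
        exact ENNReal.rpow_sum_le_const_mul_sum_rpow _ _ hp
    _ ≤ 3 ^ (p - 1) * (∑ j ∈ I, (s j : ℝ≥0∞) ^ p * (K * a j)) := by
        rw [mul_assoc, Finset.sum_mul]
        gcongr with j hj
        · exact_mod_cast hI
        · exact ha k j (by simp [I] at hj; omega)
    _ = 3 ^ (p - 1) * K * (∑ j ∈ I, (2⁻¹ : ℝ≥0∞) ^ j) := by
        simp_rw [mul_left_comm _ K, ← Finset.mul_sum, hs, mul_assoc]
    _ ≤ 3 ^ (p - 1) * K * (3 * (2 * 2⁻¹ ^ k)) := by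
        gcongr
        refine (Finset.sum_le_card_nsmul I _ _ hgeom).trans ?_
        rw [nsmul_eq_mul]
        gcongr
        exact_mod_cast hI
    _ = 3 ^ (p - 1) * K * 6 * 2⁻¹ ^ k := by ring

lemma lintegral_lipConst_dyadicProfile_rpow_lt_top {X : Type*} [MetricSpace X]
    [MeasurableSpace X] [OpensMeasurableSpace X] {μ : Measure X} {x₀ : X} (s : ℕ → ℝ≥0) {p : ℝ}
    (hp : 1 ≤ p)
    {K : ℝ≥0∞} (hK : K ≠ ⊤)
    (hann : ∀ j k, j ≤ k + 1 → μ (dyadicAnnulus x₀ j) ≤ K * μ (dyadicAnnulus x₀ k))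
    (hs : ∀ k, (s k : ℝ≥0∞) ^ p * μ (dyadicAnnulus x₀ k) = 2⁻¹ ^ k) :
    ∫⁻ x, lipConst (fun y => dyadicProfile s (dist y x₀)) x ^ p ∂μ < ⊤ := by
  set σ : ℕ → ℝ≥0∞ := fun k => ↑(∑ j ∈ Finset.Ico (k - 1) (k + 2), s j) ^ p
  have hpoint : ∀ x, lipConst (fun y => dyadicProfile s (dist y x₀)) x ^ p ≤
      ∑' k, (dyadicAnnulus x₀ k).indicator (fun _ => σ k) x := fun x => by
    rcases lt_or_ge (dist x x₀) 1 with hx | hx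
    · simp [lipConst_dyadicProfile_eq_zero s hx, ENNReal.zero_rpow_of_pos (by linarith : 0 < p)]
    · obtain ⟨k, hk⟩ := exists_mem_dyadicAnnulus hx
      refine le_trans ?_ (ENNReal.le_tsum k)
      rw [indicator_of_mem hk]
      exact ENNReal.rpow_le_rpow (lipConst_dyadicProfile_le s hk) (by linarith)
  calc ∫⁻ x, lipConst (fun y => dyadicProfile s (dist y x₀)) x ^ p ∂μ
      ≤ ∫⁻ x, ∑' k, (dyadicAnnulus x₀ k).indicator (fun _ => σ k) x ∂μ := lintegral_mono hpoint
    _ = ∑' k, σ k * μ (dyadicAnnulus x₀ k) := by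
        rw [lintegral_tsum fun k =>
          (measurable_const.indicator (measurableSet_dyadicAnnulus x₀ k)).aemeasurable]
        simp_rw [lintegral_indicator_const (measurableSet_dyadicAnnulus x₀ _)]
    _ ≤ ∑' k, 3 ^ (p - 1) * K * 6 * 2⁻¹ ^ k :=
        ENNReal.tsum_le_tsum (rpow_sum_Ico_mul_le hp hann hs)
    _ < ⊤ := by
        rw [ENNReal.tsum_mul_left, ENNReal.tsum_geometric_two]
        exact ENNReal.mul_lt_top (ENNReal.mul_lt_top (ENNReal.mul_lt_top
          (ENNReal.rpow_lt_top_of_nonneg (by linarith) (by simp)) hK.lt_top) (by simp)) (by simp)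

section Divergence

variable {α : Type*} [MeasurableSpace α] {μ : Measure α} {g : α → ℝ≥0∞} {ε : ℝ≥0∞}

lemma const_mul_measure_le_setLIntegral {S : Set α} (hS : MeasurableSet S)
    (h : ∀ x ∈ S, ε ≤ g x) : ε * μ S ≤ ∫⁻ x in S, g x ∂μ :=
  (setLIntegral_const S ε).symm.trans_le (setLIntegral_mono' hS h)

lemma lintegral_eq_top_of_measure_eq_top {S : Set α} (hS : MeasurableSet S) (hμS : μ S = ⊤)
    (hε : ε ≠ 0) (h : ∀ x ∈ S, ε ≤ g x) : ∫⁻ x, g x ∂μ = ⊤ := by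
  refine top_unique ?_
  calc ⊤ = ε * μ S := by rw [hμS, ENNReal.mul_top hε]
    _ ≤ ∫⁻ x in S, g x ∂μ := const_mul_measure_le_setLIntegral hS h
    _ ≤ ∫⁻ x, g x ∂μ := setLIntegral_le_lintegral S g

lemma lintegral_eq_top_of_le_setLIntegral {A : ℕ → Set α} (hA : ∀ k, MeasurableSet (A k))
    (hdisj : Pairwise (Function.onFun Disjoint A)) (hε : ε ≠ 0)
    (h : ∀ k, ε ≤ ∫⁻ x in A k, g x ∂μ) : ∫⁻ x, g x ∂μ = ⊤ := by
  refine top_unique ?_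
  calc ⊤ = ∑' _ : ℕ, ε := (ENNReal.tsum_const_eq_top_of_ne_zero hε).symm
    _ ≤ ∑' k, ∫⁻ x in A k, g x ∂μ := ENNReal.tsum_le_tsum h
    _ = ∫⁻ x in ⋃ k, A k, g x ∂μ := (lintegral_iUnion hA hdisj g).symm
    _ ≤ ∫⁻ x, g x ∂μ := setLIntegral_le_lintegral _ g

end Divergence

lemma exists_eventually_le_abs_dyadicProfile_sub (s : ℕ → ℝ≥0) {c : ℝ}
    (hc : ¬((Summable fun j => 2 ^ j * (s j : ℝ)) ∧ c = -∑' j, 2 ^ j * (s j : ℝ))) :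
    ∃ ε > 0, ∀ᶠ r in atTop, ε ≤ |dyadicProfile s r - c| := by
  by_cases hs : Summable fun j => 2 ^ j * (s j : ℝ)
  · set L := -∑' j, 2 ^ j * (s j : ℝ)
    have hL : 0 < |L - c| := abs_pos.2 (sub_ne_zero.2 fun h => hc ⟨hs, h.symm⟩)
    refine ⟨|L - c| / 2, half_pos hL, ?_⟩
    filter_upwards [(tendsto_dyadicProfile_nhds s hs).eventually (ball_mem_nhds L (half_pos hL))]
      with r hr
    rw [Real.dist_eq] at hr
    have := abs_sub_le L (dyadicProfile s r) c
    rw [abs_sub_comm L (dyadicProfile s r)] at this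
    linarith
  · refine ⟨1, one_pos, ?_⟩
    filter_upwards [(tendsto_dyadicProfile_atBot s hs).eventually_le_atBot (c - 1)] with r hr
    rw [abs_sub_comm]
    exact (le_abs_self _).trans' (by linarith)

lemma lintegral_rpow_abs_dyadicProfile_sub_eq_top {X : Type*} [MetricSpace X]
    [MeasurableSpace X] [OpensMeasurableSpace X] {μ : Measure X} {x₀ : X} (s : ℕ → ℝ≥0) {p : ℝ}
    (hp : 0 < p)
    (hfar : ∀ R, 0 < R → μ (ball x₀ R)ᶜ = ⊤) {ε : ℝ≥0∞} (hε : ε ≠ 0)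
    (hcrit : ∀ k, ε ≤ ((2 ^ (k + 1) * s (k + 1) : ℝ≥0) : ℝ≥0∞) ^ p * μ (dyadicAnnulus x₀ k))
    (c : ℝ) : ∫⁻ x, ENNReal.ofReal |dyadicProfile s (dist x x₀) - c| ^ p ∂μ = ⊤ := by
  by_cases hc : (Summable fun j => 2 ^ j * (s j : ℝ)) ∧ c = -∑' j, 2 ^ j * (s j : ℝ)
  · obtain ⟨hs, rfl⟩ := hc
    refine lintegral_eq_top_of_le_setLIntegral (measurableSet_dyadicAnnulus x₀)
      (pairwise_disjoint_dyadicAnnulus x₀) hε fun k => (hcrit k).trans ?_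
    refine const_mul_measure_le_setLIntegral (measurableSet_dyadicAnnulus x₀ k) fun x hx => ?_
    have hlow := neg_sum_le_dyadicProfile s (mem_dyadicAnnulus.1 hx).2.le
    have htail := hs.sum_le_tsum (Finset.range (k + 2)) fun j _ => by positivity
    rw [Finset.sum_range_succ] at htail
    gcongr
    rw [← ENNReal.ofReal_coe_nnreal]
    refine ENNReal.ofReal_le_ofReal ((le_abs_self _).trans' ?_)
    push_cast
    linarith
  · obtain ⟨δ, hδ, hev⟩ := exists_eventually_le_abs_dyadicProfile_sub s hc
    obtain ⟨R, hR⟩ := (hev.and (eventually_gt_atTop 0)).exists_forall_of_atTop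
    refine lintegral_eq_top_of_measure_eq_top measurableSet_ball.compl (hfar R (hR R le_rfl).2)
      (ε := ENNReal.ofReal δ ^ p) (by simp [hδ, hp]) fun x hx => ?_
    gcongr
    exact (hR _ (by simpa using hx)).1

theorem statement7_general {X : Type*} [MetricSpace X] [MeasurableSpace X] [BorelSpace X]
    [ConnectedSpace X]
    (μ : Measure X) (hXinf : μ Set.univ = ⊤)
    (hball : ∀ (x : X) (r : ℝ), 0 < r → 0 < μ (ball x r) ∧ μ (ball x r) < ⊤)
    (Cd : ℝ)
    (hdoubling : ∀ (x : X) (r : ℝ), 0 < r →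
      μ (ball x (2 * r)) ≤ ENNReal.ofReal Cd * μ (ball x r))
    (x₀ : X)
    (p : ℝ) (hp : 1 ≤ p) :
    ∃ f : X → ℝ, LocallyLipschitz f ∧ (∫⁻ x, lipConst f x ^ p ∂μ) < ⊤ ∧
      ∀ c : ℝ, (∫⁻ x, ENNReal.ofReal |f x - c| ^ p ∂μ) = ⊤ := by
  have hfin : ∀ R, 0 < R → μ (ball x₀ R) ≠ ⊤ := fun R hR => (hball x₀ R hR).2.ne
  have hdist : ∀ r, 0 ≤ r → ∃ y, dist y x₀ = r := fun r hr =>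
    exists_dist_eq_of_measure_univ_eq_top hXinf hfin hr
  set a : ℕ → ℝ≥0∞ := fun k => μ (dyadicAnnulus x₀ k)
  have hpos : ∀ k, a k ≠ 0 := fun k =>
    (measure_dyadicAnnulus_pos hdist (fun x r hr => (hball x r hr).1) k).ne'
  have htop : ∀ k, a k ≠ ⊤ := fun k =>
    ((measure_mono sdiff_subset).trans_lt (hball x₀ _ (by positivity)).2).ne
  have hann : ∀ j k, j ≤ k + 1 → a j ≤ ENNReal.ofReal Cd ^ 4 * a k := fun j k =>
    measure_dyadicAnnulus_le hdoubling hdist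
  set s := dyadicSlope a p
  have hs : ∀ k, (s k : ℝ≥0∞) ^ p * a k = 2⁻¹ ^ k := fun k =>
    dyadicSlope_rpow_mul (by linarith) (hpos k) (htop k)
  refine ⟨fun x => dyadicProfile s (dist x x₀),
    (locallyLipschitz_dyadicProfile s).comp (LipschitzWith.dist_left x₀).locallyLipschitz,
    lintegral_lipConst_dyadicProfile_rpow_lt_top s hp (by simp) hann hs,
    lintegral_rpow_abs_dyadicProfile_sub_eq_top s (by linarith)
      (fun R hR => measure_compl_eq_top hXinf (hfin R hR)) (ENNReal.inv_ne_zero.2 (by simp))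
      fun k => inv_le_two_pow_mul_dyadicSlope_rpow_mul hp (hpos _) (htop _) (hann _ _ le_rfl)⟩

/-- under the standing assumptions, if `μ` is globally doubling and
`r ↦ μ(B(x₀,r))` is continuous on `(0,∞)` for some `x₀`, then for every `1 ≤ p < ∞` there is
a locally Lipschitz `f : X → ℝ` with `∫ (lip f)ᵖ dμ < ∞` but `∫ |f - c|ᵖ dμ = ∞` for every
`c ∈ ℝ`. -/
theorem statement7 {X : Type*} [MetricSpace X] [MeasurableSpace X] [BorelSpace X]
    [ProperSpace X] [ConnectedSpace X]
    (μ : Measure X) (hXinf : μ Set.univ = ⊤)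
    (hball : ∀ (x : X) (r : ℝ), 0 < r → 0 < μ (ball x r) ∧ μ (ball x r) < ⊤)
    (Cd : ℝ) (hCd : 1 ≤ Cd)
    (hdoubling : ∀ (x : X) (r : ℝ), 0 < r →
      μ (ball x (2 * r)) ≤ ENNReal.ofReal Cd * μ (ball x r))
    (x₀ : X) (hcont : ContinuousOn (fun r : ℝ => μ (ball x₀ r)) (Set.Ioi 0))
    (p : ℝ) (hp : 1 ≤ p) :
    ∃ f : X → ℝ, LocallyLipschitz f ∧ (∫⁻ x, lipConst f x ^ p ∂μ) < ⊤ ∧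
      ∀ c : ℝ, (∫⁻ x, ENNReal.ofReal |f x - c| ^ p ∂μ) = ⊤ :=
  statement7_general μ hXinf hball Cd hdoubling x₀ p hp
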